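/- Let ω and c be real numbers. Then the infimum over Schwartz functions v on ℝ with ‖v‖_{L²(ℝ)} = 1 of the quantity ω² ∫_ℝ x² |v(x)|² dx + ‖x v + c D v‖²_{L²(ℝ)} equals |ωc|/(2π). (This quantity equals ⟨H_{c,ω} v, v⟩ where H_{c,ω} is the Weyl quantization of the symbol (ωx)² + (cξ + x)², so the statement computes the bottom of the spectrum of H_{c,ω}.) -/

import Mathlib

open MeasureTheory Filter Topology

noncomputable section

/-- The operator `D = (1/(2πi)) d/dx` on `ℝ`. -/
def Dop (f : ℝ → ℂ) : ℝ → ℂ :=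
  fun x => (1 / (2 * (Real.pi : ℂ) * Complex.I)) * deriv f x

section helpers

lemma normsq_eq (z : ℂ) : ‖z‖ ^ 2 = z.re * z.re + z.im * z.im := by
  rw [Complex.sq_norm, Complex.normSq_apply]

lemma norm_add_sq' (z w : ℂ) :
    ‖z + w‖ ^ 2 = ‖z‖ ^ 2 + 2 * ((starRingEnd ℂ) z * w).re + ‖w‖ ^ 2 := by
  simp only [normsq_eq, Complex.add_re, Complex.add_im, Complex.mul_re, Complex.mul_im,
    Complex.conj_re, Complex.conj_im]
  ring

lemma Iinv_eq : (1 : ℂ) / (2 * (Real.pi : ℂ) * Complex.I)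
    = -(((1 / (2 * Real.pi) : ℝ)) : ℂ) * Complex.I := by
  have h : (2 * (Real.pi : ℂ) * Complex.I) ≠ 0 := by
    simp [Real.pi_ne_zero, Complex.I_ne_zero, Complex.ofReal_ne_zero]
  rw [div_eq_iff h]
  have hπ : ((Real.pi : ℝ) : ℂ) ≠ 0 := by
    exact_mod_cast Complex.ofReal_ne_zero.2 Real.pi_ne_zero
  push_cast
  field_simp
  linear_combination Complex.I_sq

end helpers



lemma pow_mul_exp_bound (m : ℕ) {b : ℝ} (hb : 0 < b) (x : ℝ) :
    |x| ^ m * Real.exp (-b * x ^ 2) ≤ Real.exp ((m : ℝ) ^ 2 / (4 * b)) := by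
  have h1 : |x| ^ m ≤ Real.exp ((m : ℝ) * |x|) := by
    calc |x| ^ m ≤ (Real.exp |x|) ^ m :=
          pow_le_pow_left₀ (abs_nonneg x) (by linarith [Real.add_one_le_exp |x|]) m
    _ = Real.exp ((m : ℝ) * |x|) := by rw [← Real.exp_nat_mul]
  calc |x| ^ m * Real.exp (-b * x ^ 2)
      ≤ Real.exp ((m : ℝ) * |x|) * Real.exp (-b * x ^ 2) :=
        mul_le_mul_of_nonneg_right h1 (Real.exp_nonneg _)
    _ = Real.exp ((m : ℝ) * |x| + -b * x ^ 2) := (Real.exp_add _ _).symm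
    _ ≤ Real.exp ((m : ℝ) ^ 2 / (4 * b)) := by
        apply Real.exp_le_exp.2
        rw [le_div_iff₀ (by positivity)]
        have hx2 : x ^ 2 = |x| ^ 2 := (_root_.sq_abs x).symm
        rw [hx2]
        nlinarith [sq_nonneg (2 * b * |x| - (m : ℝ))]

lemma iteratedDeriv_gaussian (b : ℂ) (n : ℕ) :
    ∃ P : Polynomial ℂ, ∀ x : ℝ,
      iteratedDeriv n (fun y : ℝ => Complex.exp (-b * (y : ℂ) ^ 2)) x
        = P.eval (x : ℂ) * Complex.exp (-b * (x : ℂ) ^ 2) := by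
  induction n with
  | zero => exact ⟨1, fun x => by simp [iteratedDeriv_zero]⟩
  | succ n ih =>
    obtain ⟨P, hP⟩ := ih
    refine ⟨P.derivative - Polynomial.C (2 * b) * Polynomial.X * P, fun x => ?_⟩
    rw [iteratedDeriv_succ]
    have hg : ∀ z : ℂ, HasDerivAt (fun z : ℂ => P.eval z * Complex.exp (-b * z ^ 2))
        ((P.derivative.eval z - 2 * b * z * P.eval z) * Complex.exp (-b * z ^ 2)) z := by
      intro z
      have h1 : HasDerivAt (fun z : ℂ => -b * z ^ 2) (-b * (2 * z)) z :=
        (hasDerivAt_pow 2 z).const_mul (-b) |>.congr_deriv (by ring)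
      have h2 := (P.hasDerivAt z).mul h1.cexp
      exact h2.congr_deriv (by ring)
    have heq : iteratedDeriv n (fun y : ℝ => Complex.exp (-b * (y : ℂ) ^ 2))
        = fun y : ℝ => P.eval (y : ℂ) * Complex.exp (-b * (y : ℂ) ^ 2) := funext hP
    rw [heq]
    have := (hg (x : ℂ)).comp_ofReal
    rw [this.deriv]
    simp only [Polynomial.eval_sub, Polynomial.eval_mul, Polynomial.eval_C, Polynomial.eval_X]
    try ring

def gaussianS (b : ℂ) (hb : 0 < b.re) : SchwartzMap ℝ ℂ where
  toFun := fun y : ℝ => Complex.exp (-b * (y : ℂ) ^ 2)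
  smooth' := by
    exact (Complex.contDiff_exp (𝕜 := ℝ)).comp
      (contDiff_const.mul (Complex.ofRealCLM.contDiff.pow 2))
  decay' := by
    intro k n
    obtain ⟨P, hP⟩ := iteratedDeriv_gaussian b n
    refine ⟨∑ i ∈ Finset.range (P.natDegree + 1),
      ‖P.coeff i‖ * Real.exp (((k + i : ℕ) : ℝ) ^ 2 / (4 * b.re)), fun x => ?_⟩
    rw [norm_iteratedFDeriv_eq_norm_iteratedDeriv, hP x]
    have hnorm := norm_cexp_neg_mul_sq b x
    rw [norm_mul, hnorm]
    calc ‖x‖ ^ k * (‖P.eval (x:ℂ)‖ * Real.exp (-b.re * x ^ 2))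
        ≤ ‖x‖ ^ k * ((∑ i ∈ Finset.range (P.natDegree + 1), ‖P.coeff i‖ * |x| ^ i)
            * Real.exp (-b.re * x ^ 2)) := by
          have hpe : ‖P.eval (x:ℂ)‖ ≤ ∑ i ∈ Finset.range (P.natDegree + 1), ‖P.coeff i‖ * |x| ^ i := by
            rw [P.eval_eq_sum_range]
            refine (norm_sum_le _ _).trans (Finset.sum_le_sum fun i _ => ?_)
            rw [norm_mul, norm_pow, Complex.norm_real, Real.norm_eq_abs]
          exact mul_le_mul_of_nonneg_left
            (mul_le_mul_of_nonneg_right hpe (Real.exp_nonneg _)) (by positivity)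
      _ = ∑ i ∈ Finset.range (P.natDegree + 1),
            ‖P.coeff i‖ * (|x| ^ (k + i) * Real.exp (-b.re * x ^ 2)) := by
          rw [Finset.sum_mul, Finset.mul_sum]
          congr 1; funext i
          rw [Real.norm_eq_abs, pow_add]
          ring
      _ ≤ ∑ i ∈ Finset.range (P.natDegree + 1),
            ‖P.coeff i‖ * Real.exp (((k + i : ℕ) : ℝ) ^ 2 / (4 * b.re)) := by
          refine Finset.sum_le_sum fun i _ => ?_
          exact mul_le_mul_of_nonneg_left (pow_mul_exp_bound (k+i) hb x) (norm_nonneg _)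



lemma schwartz_integrable_aux (v w : SchwartzMap ℝ ℂ) (k : ℕ) :
    Integrable (fun x : ℝ => |x| ^ k * (‖v x‖ * ‖w x‖)) := by
  obtain ⟨C, hCpos, hC⟩ := w.decay 0 0
  have hw : ∀ x : ℝ, ‖w x‖ ≤ C := by
    intro x
    have := hC x
    simpa [norm_iteratedFDeriv_zero] using this
  refine ((v.integrable_pow_mul volume k).const_mul C).mono'
    ((_root_.continuous_abs.pow k).mul (v.continuous.norm.mul w.continuous.norm)).aestronglyMeasurable
    (Eventually.of_forall fun x => ?_)
  have h1 : 0 ≤ |x| ^ k * (‖v x‖ * ‖w x‖) := by positivity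
  rw [Real.norm_eq_abs, abs_of_nonneg h1]
  calc |x| ^ k * (‖v x‖ * ‖w x‖) ≤ |x| ^ k * (‖v x‖ * C) := by
        gcongr; exact hw x
    _ = C * (‖x‖ ^ k * ‖v x‖) := by rw [Real.norm_eq_abs]; ring

lemma integrable_bound2 {h : ℝ → ℝ} (hc : Continuous h) (v₁ w₁ v₂ w₂ : SchwartzMap ℝ ℂ)
    (k₁ k₂ : ℕ) (C₁ C₂ : ℝ)
    (hb : ∀ x, |h x| ≤ C₁ * (|x| ^ k₁ * (‖v₁ x‖ * ‖w₁ x‖)) + C₂ * (|x| ^ k₂ * (‖v₂ x‖ * ‖w₂ x‖))) :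
    Integrable h :=
  (((schwartz_integrable_aux v₁ w₁ k₁).const_mul C₁).add
    ((schwartz_integrable_aux v₂ w₂ k₂).const_mul C₂)).mono' hc.aestronglyMeasurable
    (Eventually.of_forall fun x => by simpa using hb x)

lemma integrable_bound1 {h : ℝ → ℝ} (hc : Continuous h) (v w : SchwartzMap ℝ ℂ)
    (k : ℕ) (C : ℝ)
    (hb : ∀ x, |h x| ≤ C * (|x| ^ k * (‖v x‖ * ‖w x‖))) : Integrable h :=
  integrable_bound2 hc v w v w k k C 0 (fun x => by simpa using hb x)

-- derivative of v as a Schwartz map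
lemma deriv_schwartz (v : SchwartzMap ℝ ℂ) : deriv (⇑v) = ⇑(SchwartzMap.derivCLM ℝ ℂ v) := by
  funext x; rw [SchwartzMap.derivCLM_apply]

lemma hasDerivAt_v (v : SchwartzMap ℝ ℂ) (x : ℝ) : HasDerivAt (⇑v) (deriv (⇑v) x) x :=
  ((v.smooth 1).differentiable (by norm_num) x).hasDerivAt

lemma hasDerivAt_normsq (v : SchwartzMap ℝ ℂ) (x : ℝ) :
    HasDerivAt (fun y : ℝ => ‖v y‖ ^ 2)
      (2 * ((starRingEnd ℂ) (v x) * deriv (⇑v) x).re) x := by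
  have hv := hasDerivAt_v v x
  have hconj : HasDerivAt (fun y : ℝ => (starRingEnd ℂ) (v y))
      ((starRingEnd ℂ) (deriv (⇑v) x)) x :=
    (Complex.conjCLE.toContinuousLinearMap.hasFDerivAt).comp_hasDerivAt x hv
  have hmul := hv.mul hconj
  have hre := Complex.reCLM.hasFDerivAt.comp_hasDerivAt x hmul
  have heq : (⇑Complex.reCLM ∘ (⇑v * fun y : ℝ => (starRingEnd ℂ) (v y)))
      = fun y : ℝ => ‖v y‖ ^ 2 := by
    funext y
    simp only [Function.comp_apply, Pi.mul_apply, Complex.reCLM_apply, Complex.mul_conj,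
      Complex.ofReal_re, Complex.normSq_eq_norm_sq]
  rw [heq] at hre
  refine hre.congr_deriv ?_
  simp only [Complex.reCLM_apply, Complex.add_re, Complex.mul_re, Complex.conj_re,
    Complex.conj_im]
  ring

lemma tendsto_x_normsq (v : SchwartzMap ℝ ℂ) (l : Filter ℝ) (hl : l ≤ cocompact ℝ) :
    Tendsto (fun x : ℝ => x * ‖v x‖ ^ 2) l (𝓝 0) := by
  obtain ⟨C, hCpos, hC⟩ := v.decay 1 0
  have hb : ∀ x : ℝ, ‖x * ‖v x‖ ^ 2‖ ≤ C * ‖v x‖ := by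
    intro x
    have h1 : |x| * ‖v x‖ ≤ C := by
      have := hC x
      simpa [norm_iteratedFDeriv_zero] using this
    rw [Real.norm_eq_abs, abs_mul, _root_.abs_of_nonneg (by positivity : (0:ℝ) ≤ ‖v x‖ ^ 2), pow_two]
    rw [← mul_assoc]
    exact mul_le_mul_of_nonneg_right h1 (norm_nonneg _)
  have hv0 : Tendsto (fun x : ℝ => ‖v x‖) l (𝓝 0) := by
    have := (zero_at_infty v).mono_left hl
    simpa using this.norm
  have : Tendsto (fun x : ℝ => C * ‖v x‖) l (𝓝 0) := by
    simpa using hv0.const_mul C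
  exact squeeze_zero_norm hb this

lemma integrable_normsq (v : SchwartzMap ℝ ℂ) : Integrable (fun x : ℝ => ‖v x‖ ^ 2) :=
  integrable_bound1 (by fun_prop) v v 0 1 (fun x => by
    simp [abs_of_nonneg, pow_two, mul_nonneg (norm_nonneg (v x)) (norm_nonneg (v x))])

lemma integrable_x_d (v : SchwartzMap ℝ ℂ) :
    Integrable (fun x : ℝ => x * ((starRingEnd ℂ) (v x) * deriv (⇑v) x).re) := by
  refine integrable_bound1 ?_ v (SchwartzMap.derivCLM ℝ ℂ v) 1 1 (fun x => ?_)
  · simp only [deriv_schwartz v]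
    have hw := (SchwartzMap.derivCLM ℝ ℂ v).continuous
    fun_prop
  · rw [one_mul, abs_mul, pow_one, SchwartzMap.derivCLM_apply]
    gcongr
    calc |((starRingEnd ℂ) (v x) * deriv (⇑v) x).re| ≤ ‖(starRingEnd ℂ) (v x) * deriv (⇑v) x‖ :=
          Complex.abs_re_le_norm _
      _ = ‖v x‖ * ‖deriv (⇑v) x‖ := by rw [norm_mul, RCLike.norm_conj]
    
theorem ibp (v : SchwartzMap ℝ ℂ) :
    ∫ x : ℝ, x * ((starRingEnd ℂ) (v x) * deriv (⇑v) x).re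
      = -(1 / 2) * ∫ x : ℝ, ‖v x‖ ^ 2 := by
  set d : ℝ → ℝ := fun x => ((starRingEnd ℂ) (v x) * deriv (⇑v) x).re with hd
  set g' : ℝ → ℝ := fun x => ‖v x‖ ^ 2 + x * (2 * d x) with hg'
  have hderiv : ∀ x : ℝ, HasDerivAt (fun y : ℝ => y * ‖v y‖ ^ 2) (g' x) x := by
    intro x
    have := (hasDerivAt_id x).mul (hasDerivAt_normsq v x)
    refine this.congr_deriv ?_
    simp only [hg', hd, id]
    ring
  have hint : Integrable g' := by
    apply (integrable_normsq v).add
    have := (integrable_x_d v).const_mul 2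
    refine this.congr (Eventually.of_forall fun x => ?_)
    simp only [hd]; ring
  have h1 : ∫ x in Set.Ioi (0:ℝ), g' x = 0 - (0 * ‖v 0‖ ^ 2) :=
    integral_Ioi_of_hasDerivAt_of_tendsto' (fun x _ => hderiv x) hint.integrableOn
      (tendsto_x_normsq v atTop _root_.atTop_le_cocompact)
  have h2 : ∫ x in Set.Iic (0:ℝ), g' x = (0 * ‖v 0‖ ^ 2) - 0 :=
    integral_Iic_of_hasDerivAt_of_tendsto' (fun x _ => hderiv x) hint.integrableOn
      (tendsto_x_normsq v atBot _root_.atBot_le_cocompact)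
  have h3 : ∫ x : ℝ, g' x = 0 := by
    rw [← intervalIntegral.integral_Iic_add_Ioi hint.integrableOn hint.integrableOn, h1, h2]
    ring
  have h4 : ∫ x : ℝ, g' x = (∫ x : ℝ, ‖v x‖ ^ 2) + 2 * ∫ x : ℝ, x * d x := by
    rw [hg']
    rw [integral_add (integrable_normsq v)]
    · congr 1
      rw [← integral_const_mul]
      congr 1
      funext x
      ring
    · have := (integrable_x_d v).const_mul 2
      refine this.congr (Eventually.of_forall fun x => ?_)
      simp only [hd]; ring
  rw [h3] at h4
  linarith [h4]



section lower

lemma lower_bound (omg c : ℝ) (v : SchwartzMap ℝ ℂ) (hv : (∫ x : ℝ, ‖v x‖ ^ 2) = 1) :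
    |omg * c| / (2 * Real.pi) ≤
      omg ^ 2 * (∫ x : ℝ, x ^ 2 * ‖v x‖ ^ 2) +
        ∫ x : ℝ, ‖((x : ℝ) : ℂ) * v x + (c : ℂ) * Dop (⇑v) x‖ ^ 2 := by
  have hπ := Real.pi_pos
  set w := SchwartzMap.derivCLM ℝ ℂ v with hwdef
  have hwv : ∀ x : ℝ, deriv (⇑v) x = w x := fun x => (SchwartzMap.derivCLM_apply ℝ v x).symm
  set F : ℝ → ℂ := fun x => ((x : ℝ) : ℂ) * v x + (c : ℂ) * Dop (⇑v) x with hF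
  set A := ∫ x : ℝ, x ^ 2 * ‖v x‖ ^ 2 with hA
  set B := ∫ x : ℝ, ‖F x‖ ^ 2 with hB
  set γ : ℝ := 1 / (2 * Real.pi) with hγ
  have hγ0 : 0 < γ := by positivity
  have hDop : ∀ x : ℝ, Dop (⇑v) x = -((γ : ℝ) : ℂ) * Complex.I * deriv (⇑v) x := by
    intro x; rw [Dop, Iinv_eq]
  have hvc : Continuous (⇑v) := v.continuous
  have hwc : Continuous (deriv (⇑v)) := by
    rw [deriv_schwartz v]; exact w.continuous
  have hdopc : Continuous (Dop (⇑v)) := by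
    unfold Dop; exact continuous_const.mul hwc
  have hFc : Continuous F := by
    rw [hF]
    exact (Complex.continuous_ofReal.mul hvc).add (continuous_const.mul hdopc)
  have hc1 : Continuous fun x : ℝ => Complex.I * (x : ℂ) * v x :=
    (continuous_const.mul Complex.continuous_ofReal).mul hvc
  have hFb : ∀ x : ℝ, ‖F x‖ ≤ |x| * ‖v x‖ + (|c| * γ) * ‖w x‖ := by
    intro x
    rw [hF]
    refine (norm_add_le _ _).trans (le_of_eq ?_)
    rw [norm_mul, norm_mul, Complex.norm_real, Complex.norm_real, Real.norm_eq_abs,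
      Real.norm_eq_abs, hDop x, hwv x]
    rw [norm_mul, norm_mul, Complex.norm_I, norm_neg, Complex.norm_real, Real.norm_eq_abs,
      abs_of_pos hγ0]
    ring
  have hIA : Integrable (fun x : ℝ => x ^ 2 * ‖v x‖ ^ 2) := by
    refine integrable_bound1 ((continuous_pow 2).mul (hvc.norm.pow 2)) v v 2 1 (fun x => ?_)
    rw [one_mul, _root_.abs_of_nonneg (by positivity)]
    exact le_of_eq (by rw [← _root_.sq_abs x]; ring)
  have hIF : Integrable (fun x : ℝ => ‖F x‖ ^ 2) := by
    refine integrable_bound2 (hFc.norm.pow 2) v v w w 2 0 2 (2 * (|c| * γ) ^ 2) (fun x => ?_)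
    rw [_root_.abs_of_nonneg (by positivity), pow_zero]
    have h1 := hFb x
    nlinarith [norm_nonneg (F x), norm_nonneg (v x), norm_nonneg (w x), abs_nonneg x,
      sq_nonneg (|x| * ‖v x‖ - (|c| * γ) * ‖w x‖), abs_nonneg c, hγ0.le,
      mul_self_le_mul_self (norm_nonneg (F x)) h1]
  set G : ℝ → ℝ := fun x => ((starRingEnd ℂ) (Complex.I * (x : ℂ) * v x) * F x).re with hG
  have hIG : Integrable G := by
    refine integrable_bound2 ?_ v v v w 2 1 1 (|c| * γ) (fun x => ?_)
    · rw [hG]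
      exact Complex.continuous_re.comp ((Complex.continuous_conj.comp hc1).mul hFc)
    · have h0 : |G x| ≤ (|x| * ‖v x‖) * ‖F x‖ := by
        rw [hG]
        calc |((starRingEnd ℂ) (Complex.I * (x : ℂ) * v x) * F x).re|
            ≤ ‖(starRingEnd ℂ) (Complex.I * (x : ℂ) * v x) * F x‖ := Complex.abs_re_le_norm _
          _ = (|x| * ‖v x‖) * ‖F x‖ := by
              rw [norm_mul, RCLike.norm_conj, norm_mul, norm_mul, Complex.norm_I,
                Complex.norm_real, Real.norm_eq_abs, one_mul]
      refine h0.trans ?_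
      have h1 := hFb x
      have h2 : 0 ≤ |x| * ‖v x‖ := by positivity
      calc (|x| * ‖v x‖) * ‖F x‖ ≤ (|x| * ‖v x‖) * (|x| * ‖v x‖ + (|c| * γ) * ‖w x‖) :=
            mul_le_mul_of_nonneg_left h1 h2
        _ = 1 * (|x| ^ 2 * (‖v x‖ * ‖v x‖)) + (|c| * γ) * (|x| ^ 1 * (‖v x‖ * ‖w x‖)) := by
            ring
  -- value of the cross integral
  have hGval : ∫ x : ℝ, G x = c / (4 * Real.pi) := by
    have hpt : G = fun x : ℝ => (-(c * γ)) * (x * ((starRingEnd ℂ) (v x) * deriv (⇑v) x).re) := by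
      funext x
      simp only [hG, hF]
      rw [hDop x]
      set p := v x
      set q := deriv (⇑v) x
      simp only [Complex.mul_re, Complex.mul_im, Complex.add_re, Complex.add_im,
        Complex.conj_re, Complex.conj_im, Complex.I_re, Complex.I_im, Complex.ofReal_re,
        Complex.ofReal_im, Complex.neg_re, Complex.neg_im, map_mul, Complex.conj_I]
      ring
    rw [hpt, MeasureTheory.integral_const_mul, ibp v, hv]
    rw [hγ, eq_div_iff (by positivity : (4 * Real.pi) ≠ 0)]
    field_simp
    ring
  have hquad : ∀ t : ℝ, 0 ≤ A * (t * t) + (2 * (c / (4 * Real.pi))) * t + B := by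
    intro t
    have hpt : ∀ x : ℝ, ‖(t : ℂ) * (Complex.I * (x : ℂ) * v x) + F x‖ ^ 2
        = (t * t) * (x ^ 2 * ‖v x‖ ^ 2) + ((2 * t) * G x + ‖F x‖ ^ 2) := by
      intro x
      rw [norm_add_sq']
      have h1 : ‖(t : ℂ) * (Complex.I * (x : ℂ) * v x)‖ ^ 2 = (t * t) * (x ^ 2 * ‖v x‖ ^ 2) := by
        rw [norm_mul, norm_mul, norm_mul, Complex.norm_I, Complex.norm_real,
          Complex.norm_real, Real.norm_eq_abs, Real.norm_eq_abs]
        rw [show (|t| * (1 * |x| * ‖v x‖)) ^ 2 = |t| ^ 2 * (|x| ^ 2 * ‖v x‖ ^ 2) by ring,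
          _root_.sq_abs, _root_.sq_abs]
        ring
      have h2 : ((starRingEnd ℂ) ((t : ℂ) * (Complex.I * (x : ℂ) * v x)) * F x).re
          = t * G x := by
        rw [map_mul, Complex.conj_ofReal, mul_assoc, Complex.re_ofReal_mul, hG]
      rw [h1, h2]
      ring
    have hint1 : Integrable (fun x : ℝ => (t * t) * (x ^ 2 * ‖v x‖ ^ 2)) := hIA.const_mul _
    have hint2 : Integrable (fun x : ℝ => (2 * t) * G x) := hIG.const_mul _
    calc (0 : ℝ) ≤ ∫ x : ℝ, ‖(t : ℂ) * (Complex.I * (x : ℂ) * v x) + F x‖ ^ 2 :=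
          integral_nonneg (fun x => by positivity)
      _ = ∫ x : ℝ, ((t * t) * (x ^ 2 * ‖v x‖ ^ 2) + ((2 * t) * G x + ‖F x‖ ^ 2)) := by
          congr 1; funext x; exact hpt x
      _ = (t * t) * A + ((2 * t) * (∫ x : ℝ, G x) + B) := by
          rw [integral_add hint1 (by exact hint2.add hIF), integral_add hint2 hIF,
            MeasureTheory.integral_const_mul, MeasureTheory.integral_const_mul]
      _ = A * (t * t) + (2 * (c / (4 * Real.pi))) * t + B := by rw [hGval]; ring
  have hdisc := discrim_le_zero hquad
  rw [discrim] at hdisc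
  have hK2 : (c / (4 * Real.pi)) ^ 2 ≤ A * B := by nlinarith [hdisc]
  have hA0 : 0 ≤ A := integral_nonneg (fun x => by positivity)
  have hB0 : 0 ≤ B := integral_nonneg (fun x => by positivity)
  set s := Real.sqrt A with hs
  set u := Real.sqrt B with hu
  have hs2 : s ^ 2 = A := Real.sq_sqrt hA0
  have hu2 : u ^ 2 = B := Real.sq_sqrt hB0
  have hsu : |c| / (4 * Real.pi) ≤ s * u := by
    have he : |c| / (4 * Real.pi) = |c / (4 * Real.pi)| := by
      rw [abs_div, _root_.abs_of_pos (by positivity : (0:ℝ) < 4 * Real.pi)]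
    rw [he, ← Real.sqrt_sq_eq_abs]
    calc Real.sqrt ((c / (4 * Real.pi)) ^ 2) ≤ Real.sqrt (A * B) := Real.sqrt_le_sqrt hK2
      _ = s * u := Real.sqrt_mul hA0 B
  rw [abs_mul, div_le_iff₀ (by positivity)]
  have h5 : |omg| * (|c| / (4 * Real.pi)) ≤ |omg| * (s * u) :=
    mul_le_mul_of_nonneg_left hsu (abs_nonneg omg)
  have h6 : |omg| * |c| ≤ 4 * Real.pi * (|omg| * (s * u)) := by
    calc |omg| * |c| = 4 * Real.pi * (|omg| * (|c| / (4 * Real.pi))) := by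
          field_simp
      _ ≤ 4 * Real.pi * (|omg| * (s * u)) :=
          mul_le_mul_of_nonneg_left h5 (by positivity)
  have h8 : 4 * Real.pi * (|omg| * (s * u)) ≤ 2 * Real.pi * ((|omg| * s) ^ 2 + u ^ 2) := by
    nlinarith [two_mul_le_add_sq (|omg| * s) u, hπ]
  have h9 : 2 * Real.pi * ((|omg| * s) ^ 2 + u ^ 2) = (omg ^ 2 * A + B) * (2 * Real.pi) := by
    rw [mul_pow, _root_.sq_abs, hs2, hu2]
    ring
  linarith

end lower


section upper

lemma gauss_mem (omg c α β : ℝ) (hα : 0 < α) :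
    (omg ^ 2 + (1 + c * β) ^ 2 + (c * α) ^ 2) / (4 * Real.pi * α) ∈
      { r : ℝ | ∃ v : SchwartzMap ℝ ℂ,
        (∫ x : ℝ, ‖v x‖ ^ 2) = 1 ∧
        r = omg ^ 2 * (∫ x : ℝ, x ^ 2 * ‖v x‖ ^ 2) +
          ∫ x : ℝ, ‖((x : ℝ) : ℂ) * v x + (c : ℂ) * Dop (⇑v) x‖ ^ 2 } := by
  have hπ := Real.pi_pos
  set b : ℂ := ((Real.pi * α : ℝ) : ℂ) - ((Real.pi * β : ℝ) : ℂ) * Complex.I with hb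
  have hbre : b.re = Real.pi * α := by simp [hb]
  have hbim : b.im = -(Real.pi * β) := by simp [hb]
  have hb0 : 0 < b.re := by rw [hbre]; positivity
  set N : ℝ := Real.sqrt (Real.sqrt (2 * α)) with hN
  have hN0 : (0:ℝ) ≤ N := Real.sqrt_nonneg _
  have hN2 : N ^ 2 = Real.sqrt (2 * α) := Real.sq_sqrt (Real.sqrt_nonneg _)
  set v : SchwartzMap ℝ ℂ := N • gaussianS b hb0 with hvdef
  have happ : ∀ x : ℝ, v x = (N : ℂ) * Complex.exp (-b * (x : ℂ) ^ 2) := by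
    intro x
    rw [hvdef]
    rw [SchwartzMap.smul_apply]
    rw [show (gaussianS b hb0) x = Complex.exp (-b * (x : ℂ) ^ 2) from rfl]
    rw [Complex.real_smul]
  have hnorm : ∀ x : ℝ, ‖v x‖ ^ 2 = N ^ 2 * Real.exp (-(2 * Real.pi * α) * x ^ 2) := by
    intro x
    rw [happ x, norm_mul, Complex.norm_real, Real.norm_eq_abs, _root_.abs_of_nonneg hN0,
      norm_cexp_neg_mul_sq, hbre, mul_pow]
    congr 1
    rw [pow_two, ← Real.exp_add]
    congr 1
    ring
  have hL2 : (∫ x : ℝ, ‖v x‖ ^ 2) = 1 := by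
    rw [show (fun x : ℝ => ‖v x‖ ^ 2)
        = fun x : ℝ => N ^ 2 * Real.exp (-(2 * Real.pi * α) * x ^ 2) from funext hnorm]
    rw [MeasureTheory.integral_const_mul, integral_gaussian, hN2,
      ← Real.sqrt_mul (by positivity : (0:ℝ) ≤ 2 * α)]
    rw [show 2 * α * (Real.pi / (2 * Real.pi * α)) = 1 by field_simp]
    exact Real.sqrt_one
  have hdv : ∀ x : ℝ, deriv (⇑v) x = -2 * b * (x : ℂ) * v x := by
    intro x
    have h0 : HasDerivAt (fun z : ℂ => -b * z ^ 2) (-b * (2 * (x:ℂ))) (x:ℂ) :=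
      ((hasDerivAt_pow 2 _).const_mul (-b)).congr_deriv (by ring)
    have h1 : HasDerivAt (fun z : ℂ => Complex.exp (-b * z ^ 2))
        (Complex.exp (-b * (x:ℂ) ^ 2) * (-b * (2 * (x:ℂ)))) (x:ℂ) := h0.cexp
    have h2 := (h1.comp_ofReal).const_mul (N : ℂ)
    have h3 : ⇑v = fun y : ℝ => (N : ℂ) * Complex.exp (-b * (y : ℂ) ^ 2) := funext happ
    rw [h3, h2.deriv]
    beta_reduce
    ring
  have hA : (∫ x : ℝ, x ^ 2 * ‖v x‖ ^ 2) = 1 / (4 * Real.pi * α) := by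
    have hibp := ibp v
    rw [hL2] at hibp
    have hpt : (fun x : ℝ => x * ((starRingEnd ℂ) (v x) * deriv (⇑v) x).re)
        = fun x : ℝ => (-(2 * Real.pi * α)) * (x ^ 2 * ‖v x‖ ^ 2) := by
      funext x
      rw [hdv x]
      rw [show (starRingEnd ℂ) (v x) * (-2 * b * (x:ℂ) * v x)
          = (-2 * b * (x:ℂ)) * (v x * (starRingEnd ℂ) (v x)) by ring,
        Complex.mul_conj]
      rw [show ‖v x‖ ^ 2 = Complex.normSq (v x) by
        rw [Complex.sq_norm]]
      simp only [Complex.mul_re, Complex.mul_im, Complex.ofReal_re, Complex.ofReal_im,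
        Complex.neg_re, Complex.neg_im, Complex.re_ofNat, Complex.im_ofNat, hbre, hbim]
      push_cast
      ring
    rw [hpt, MeasureTheory.integral_const_mul] at hibp
    have h4πα : (4 * Real.pi * α) ≠ 0 := by positivity
    field_simp at hibp ⊢
    linarith
  have hπC : ((Real.pi : ℝ) : ℂ) ≠ 0 := Complex.ofReal_ne_zero.2 Real.pi_ne_zero
  have hconst : ∀ x : ℝ, ((x : ℝ) : ℂ) * v x + (c : ℂ) * Dop (⇑v) x
      = (((1 + c * β : ℝ) : ℂ) + ((c * α : ℝ) : ℂ) * Complex.I) * ((x : ℂ) * v x) := by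
    intro x
    rw [show Dop (⇑v) x = (1 / (2 * (Real.pi : ℂ) * Complex.I)) * deriv (⇑v) x from rfl]
    rw [hdv x, hb]
    push_cast
    field_simp
    ring_nf
    rw [Complex.I_sq]
    ring
  have hBpt : ∀ x : ℝ, ‖((x : ℝ) : ℂ) * v x + (c : ℂ) * Dop (⇑v) x‖ ^ 2
      = ((1 + c * β) ^ 2 + (c * α) ^ 2) * (x ^ 2 * ‖v x‖ ^ 2) := by
    intro x
    rw [hconst x, norm_mul, mul_pow]
    have hz : ‖(((1 + c * β : ℝ) : ℂ) + ((c * α : ℝ) : ℂ) * Complex.I)‖ ^ 2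
        = (1 + c * β) ^ 2 + (c * α) ^ 2 := by
      rw [normsq_eq]
      simp only [Complex.add_re, Complex.add_im, Complex.ofReal_re, Complex.ofReal_im,
        Complex.I_re, Complex.I_im, Complex.mul_re, Complex.mul_im]
      ring
    rw [hz, norm_mul, Complex.norm_real, Real.norm_eq_abs]
    rw [show (|x| * ‖v x‖) ^ 2 = |x| ^ 2 * ‖v x‖ ^ 2 by ring, _root_.sq_abs]
  refine ⟨v, hL2, ?_⟩
  rw [show (fun x : ℝ => ‖((x : ℝ) : ℂ) * v x + (c : ℂ) * Dop (⇑v) x‖ ^ 2)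
      = fun x : ℝ => ((1 + c * β) ^ 2 + (c * α) ^ 2) * (x ^ 2 * ‖v x‖ ^ 2) from funext hBpt]
  rw [MeasureTheory.integral_const_mul, hA]
  field_simp
  ring

end upper


/-- The bottom of the spectrum of the Weyl quantization of `(ωx)² + (cξ + x)²`
equals `|ωc|/(2π)`. -/
theorem inf_harmonic_energy_one_dim (ω c : ℝ) :
    sInf { r : ℝ | ∃ v : SchwartzMap ℝ ℂ,
        (∫ x : ℝ, ‖v x‖ ^ 2) = 1 ∧
        r = ω ^ 2 * (∫ x : ℝ, x ^ 2 * ‖v x‖ ^ 2) +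
          ∫ x : ℝ, ‖((x : ℝ) : ℂ) * v x + (c : ℂ) * Dop (⇑v) x‖ ^ 2 } =
      |ω * c| / (2 * Real.pi) := by
  have hπ := Real.pi_pos
  set S := { r : ℝ | ∃ v : SchwartzMap ℝ ℂ,
        (∫ x : ℝ, ‖v x‖ ^ 2) = 1 ∧
        r = ω ^ 2 * (∫ x : ℝ, x ^ 2 * ‖v x‖ ^ 2) +
          ∫ x : ℝ, ‖((x : ℝ) : ℂ) * v x + (c : ℂ) * Dop (⇑v) x‖ ^ 2 } with hS
  have hlb : ∀ r ∈ S, |ω * c| / (2 * Real.pi) ≤ r := by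
    rintro r ⟨v, hv1, rfl⟩
    exact lower_bound ω c v hv1
  have hbdd : BddBelow S := ⟨_, hlb⟩
  have hne : S.Nonempty := ⟨_, gauss_mem ω c 1 0 one_pos⟩
  refine le_antisymm ?_ (le_csInf hne hlb)
  rcases eq_or_ne c 0 with hc | hc
  · subst hc
    rw [mul_zero, abs_zero, zero_div]
    refine le_of_forall_pos_le_add (fun ε hε => ?_)
    have hα : (0:ℝ) < (ω ^ 2 + 1) / (4 * Real.pi * ε) := by positivity
    have hmem := gauss_mem ω 0 ((ω ^ 2 + 1) / (4 * Real.pi * ε)) 0 hα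
    have hval : (ω ^ 2 + (1 + 0 * 0) ^ 2 + (0 * ((ω ^ 2 + 1) / (4 * Real.pi * ε))) ^ 2) /
        (4 * Real.pi * ((ω ^ 2 + 1) / (4 * Real.pi * ε))) = ε := by
      rw [zero_mul, zero_mul]
      have h1 : (0:ℝ) < ω ^ 2 + 1 := by positivity
      field_simp
      ring
    calc sInf S ≤ _ := csInf_le hbdd hmem
      _ ≤ 0 + ε := by rw [hval]; linarith
  rcases eq_or_ne ω 0 with hω | hω
  · subst hω
    rw [zero_mul, abs_zero, zero_div]
    refine le_of_forall_pos_le_add (fun ε hε => ?_)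
    have hα : (0:ℝ) < 4 * Real.pi * ε / c ^ 2 := by positivity
    have hmem := gauss_mem 0 c (4 * Real.pi * ε / c ^ 2) (-1 / c) hα
    have hval : ((0:ℝ) ^ 2 + (1 + c * (-1 / c)) ^ 2 + (c * (4 * Real.pi * ε / c ^ 2)) ^ 2) /
        (4 * Real.pi * (4 * Real.pi * ε / c ^ 2)) = ε := by
      rw [show (1 + c * (-1 / c)) = 0 by field_simp; norm_num]
      field_simp
      ring
    calc sInf S ≤ _ := csInf_le hbdd hmem
      _ ≤ 0 + ε := by rw [hval]; linarith
  · have hα : (0:ℝ) < |ω| / |c| := by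
      have := abs_pos.2 hω
      have := abs_pos.2 hc
      positivity
    have hmem := gauss_mem ω c (|ω| / |c|) (-1 / c) hα
    have hval : (ω ^ 2 + (1 + c * (-1 / c)) ^ 2 + (c * (|ω| / |c|)) ^ 2) /
        (4 * Real.pi * (|ω| / |c|)) = |ω * c| / (2 * Real.pi) := by
      rw [show (1 + c * (-1 / c)) = 0 by field_simp; norm_num]
      have hω' : |ω| ≠ 0 := abs_ne_zero.2 hω
      have hc' : |c| ≠ 0 := abs_ne_zero.2 hc
      rw [abs_mul]
      rw [div_eq_div_iff (by positivity) (by positivity)]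
      field_simp
      simp only [_root_.sq_abs]
      ring
    calc sInf S ≤ _ := csInf_le hbdd hmem
      _ = |ω * c| / (2 * Real.pi) := hval

end
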